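/- arXiv:1804.03011 — 8 statements merged into one kernel-verified Lean document; each statement's English description precedes it below -/
import Mathlib

section
/- Let D be a symmetric monoidal closed category with countable coproducts, and let X be an object of D. The endofunctor F on D defined by FQ = I + X ⊗ Q (coproduct of the tensor unit with X ⊗ Q) has an initial algebra whose carrier is X⁎ = ∐_{n<ω} X^{⊗n}, with algebra structure [i_X, δ_X] : I + X ⊗ X⁎ → X⁎ given by the unit i_X : I → X⁎ of the free monoid object and by δ_X = m_X ∘ (η_X ⊗ X⁎), where m_X is the multiplication of the free monoid object X⁎ and η_X : X → X⁎ is the first coproduct injection. -/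
open CategoryTheory CategoryTheory.Limits CategoryTheory.MonoidalCategory

universe v u

variable {D : Type u} [Category.{v} D] [MonoidalCategory D] [SymmetricCategory D]
  [MonoidalClosed D] [HasCountableCoproducts D]

/-- The `n`-fold tensor power of an object `X`. -/
def tpow (X : D) : ℕ → D
  | 0 => 𝟙_ D
  | n + 1 => X ⊗ tpow X n

/-- The canonical isomorphism `X^{⊗n} ⊗ X^{⊗k} ≅ X^{⊗(n+k)}`. -/
def tpowAdd (X : D) : ∀ n k : ℕ, tpow X n ⊗ tpow X k ≅ tpow X (n + k)
  | 0, k => λ_ (tpow X k) ≪≫ eqToIso (by rw [Nat.zero_add])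
  | n + 1, k =>
      α_ X (tpow X n) (tpow X k) ≪≫ whiskerLeftIso X (tpowAdd X n k) ≪≫
        eqToIso (by rw [Nat.succ_add]; rfl)

/-- The endofunctor `F Q = I + X ⊗ Q`. -/
@[simps]
noncomputable def Ffun (X : D) : D ⥤ D where
  obj Q := (𝟙_ D) ⨿ (X ⊗ Q)
  map f := coprod.map (𝟙 (𝟙_ D)) (X ◁ f)

/-- The carrier `X⁎ = ∐ₙ X^{⊗n}` of the free monoid object on `X`. -/
noncomputable abbrev Xstar (X : D) : D := ∐ tpow X

/-- The unit `i_X : I ⟶ X⁎`: the coproduct injection of `X^{⊗0} = I`. -/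
noncomputable def iX (X : D) : 𝟙_ D ⟶ Xstar X := Sigma.ι (tpow X) 0

/-- The universal morphism `η_X : X ⟶ X⁎`: the first coproduct injection
(composed with the canonical isomorphism `X ≅ X ⊗ I = X^{⊗1}`). -/
noncomputable def etaX (X : D) : X ⟶ Xstar X := (ρ_ X).inv ≫ Sigma.ι (tpow X) 1

/-- Auxiliary family of maps used to define the mediating morphism. -/
noncomputable def toAlg (X : D) {Q : D} (α0 : 𝟙_ D ⟶ Q) (α1 : X ⊗ Q ⟶ Q) :
    ∀ n : ℕ, tpow X n ⟶ Q
  | 0 => α0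
  | n + 1 => (X ◁ toAlg X α0 α1 n) ≫ α1

lemma eqToHom_ι (X : D) {a b : ℕ} (hab : b = a) (h : tpow X b = tpow X a) :
    eqToHom h ≫ Sigma.ι (tpow X) a = Sigma.ι (tpow X) b := by
  subst hab; simp

lemma key (X : D) (mX : Xstar X ⊗ Xstar X ⟶ Xstar X)
    (hmX : ∀ n k : ℕ,
      (Sigma.ι (tpow X) n ⊗ₘ Sigma.ι (tpow X) k) ≫ mX =
        (tpowAdd X n k).hom ≫ Sigma.ι (tpow X) (n + k)) (n : ℕ) :
    (X ◁ Sigma.ι (tpow X) n) ≫ (etaX X ▷ Xstar X) ≫ mX = Sigma.ι (tpow X) (n + 1) := by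
  have h1 : (X ◁ Sigma.ι (tpow X) n) ≫ (etaX X ▷ Xstar X) =
      ((ρ_ X).inv ▷ tpow X n) ≫ (Sigma.ι (tpow X) 1 ⊗ₘ Sigma.ι (tpow X) n) := by
    rw [etaX]
    erw [comp_whiskerRight, whisker_exchange_assoc, whisker_exchange, MonoidalCategory.tensorHom_def]
  rw [reassoc_of% h1]
  erw [hmX 1 n]
  show ((ρ_ X).inv ▷ tpow X n) ≫ (tpowAdd X 1 n).hom ≫ _ = _
  have h2 : (tpowAdd X 1 n).hom =
      (α_ X (𝟙_ D) (tpow X n)).hom ≫ (X ◁ ((λ_ (tpow X n)).hom ≫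
        eqToHom (congrArg (tpow X) (Nat.zero_add n).symm))) ≫
        eqToHom (congrArg (tpow X) (Nat.succ_add 0 n).symm) := rfl
  rw [h2]
  simp only [MonoidalCategory.whiskerLeft_comp, Category.assoc]
  erw [MonoidalCategory.triangle_assoc, inv_hom_whiskerRight_assoc,
    MonoidalCategory.whiskerLeft_eqToHom, eqToHom_trans_assoc]
  exact eqToHom_ι X (Nat.add_comm 1 n).symm _

lemma tensor_hom_ext (X : D) {Q : D} {f g : X ⊗ Xstar X ⟶ Q}
    (h : ∀ n : ℕ, (X ◁ Sigma.ι (tpow X) n) ≫ f = (X ◁ Sigma.ι (tpow X) n) ≫ g) :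
    f = g := by
  haveI : PreservesColimitsOfSize.{0, 0} (tensorLeft X) :=
    preservesColimitsOfSize_shrink _
  have hc := isColimitOfPreserves (tensorLeft X)
    (colimit.isColimit (Discrete.functor (tpow X)))
  apply hc.hom_ext
  rintro ⟨n⟩
  simpa using h n

/-- Let `m_X` be the multiplication of the free monoid object `X⁎`
(characterized by having the `(n+k)`-th coproduct injection as its `(n,k)`-component).
Then the endofunctor `F Q = I + X ⊗ Q` has an initial algebra carried by `X⁎`,
with structure `[i_X, δ_X] : I + X ⊗ X⁎ ⟶ X⁎` where `δ_X = m_X ∘ (η_X ⊗ X⁎)`. -/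
theorem Xstar_isInitial_algebra (X : D) (mX : Xstar X ⊗ Xstar X ⟶ Xstar X)
    (hmX : ∀ n k : ℕ,
      (Sigma.ι (tpow X) n ⊗ₘ Sigma.ι (tpow X) k) ≫ mX =
        (tpowAdd X n k).hom ≫ Sigma.ι (tpow X) (n + k)) :
    Nonempty (IsInitial
      (⟨Xstar X, coprod.desc (iX X) ((etaX X ▷ Xstar X) ≫ mX)⟩ :
        Endofunctor.Algebra (Ffun X))) := by
  set δ : X ⊗ Xstar X ⟶ Xstar X := (etaX X ▷ Xstar X) ≫ mX with hδ
  refine ⟨IsInitial.ofUniqueHom (fun A => ?_) (fun A m => ?_)⟩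
  · refine ⟨Sigma.desc (toAlg X (coprod.inl ≫ A.str) (coprod.inr ≫ A.str)), ?_⟩
    apply coprod.hom_ext
    · simp [Ffun, iX, toAlg]
      erw [coprod.inl_desc_assoc, colimit.ι_desc]
      rfl
    · erw [Ffun_map, coprod.inr_map_assoc, coprod.inr_desc_assoc]
      apply tensor_hom_ext
      intro n
      symm
      rw [hδ]
      simp only [Category.assoc]
      erw [reassoc_of% key X mX hmX n, ← MonoidalCategory.whiskerLeft_comp_assoc,
        colimit.ι_desc, colimit.ι_desc]
      rfl
  · have hm := m.h
    have h0 : iX X ≫ m.f = coprod.inl ≫ A.str := by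
      have := congrArg (fun t => coprod.inl ≫ t) hm
      simp [Ffun] at this
      erw [coprod.inl_desc] at this
      exact this.symm
    have h1 : δ ≫ m.f = (X ◁ m.f) ≫ coprod.inr ≫ A.str := by
      have := congrArg (fun t => coprod.inr ≫ t) hm
      simp [Ffun] at this
      erw [coprod.inr_desc] at this
      exact this.symm
    apply Endofunctor.Algebra.Hom.ext
    apply colimit.hom_ext
    rintro ⟨n⟩
    show Sigma.ι (tpow X) n ≫ m.f = Sigma.ι (tpow X) n ≫ _
    rw [colimit.ι_desc]
    induction n with
    | zero => exact h0
    | succ n ih =>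
      erw [← key X mX hmX n, Category.assoc, ← hδ, h1,
        ← MonoidalCategory.whiskerLeft_comp_assoc, ih]
      rfl
end

section
/- Let D be a symmetric monoidal closed category with countable coproducts and binary products, and let X, Y be objects of D. The endofunctor T on D defined by TQ = Y × [X, Q] (binary product of Y with the internal hom) has a terminal coalgebra whose carrier is the internal hom [X⁎, Y], where X⁎ = ∐_{n<ω} X^{⊗n} is the free monoid object on X; its output component [X⁎,Y] → Y is evaluation at the unit i_X : I → X⁎ (i.e. the composite [X⁎,Y] ≅ [X⁎,Y] ⊗ I → [X⁎,Y] ⊗ X⁎ → Y using ev), and its transition component [X⁎,Y] → [X, [X⁎,Y]] is the double currying of ev ∘ ([X⁎,Y] ⊗ m_X) ∘ ([X⁎,Y] ⊗ η_X ⊗ X⁎). -/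
open CategoryTheory CategoryTheory.Limits CategoryTheory.MonoidalCategory
  CategoryTheory.MonoidalClosed

universe v u

variable {D : Type u} [Category.{v} D] [MonoidalCategory D] [SymmetricCategory D]
  [MonoidalClosed D] [HasCountableCoproducts D] [HasBinaryProducts D]

/-- The endofunctor `T Q = Y × [X, Q]`. -/
@[simps]
noncomputable def Tfun (X Y : D) : D ⥤ D where
  obj Q := Y ⨯ (ihom X).obj Q
  map f := prod.map (𝟙 Y) ((ihom X).map f)

set_option linter.unusedSectionVars false

section Aux

/-- The braiding gives a natural isomorphism `tensorLeft Q ≅ tensorRight Q`. -/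
noncomputable def tlrIso (Q : D) : tensorLeft Q ≅ tensorRight Q :=
  NatIso.ofComponents (fun Z => β_ Q Z) (by intros; simp)

lemma tensorRight_preservesColimits (Q : D) :
    PreservesColimitsOfSize.{0, 0} (tensorRight Q) :=
  haveI : PreservesColimitsOfSize.{v, v} (tensorRight Q) :=
    preservesColimits_of_natIso (tlrIso Q)
  preservesColimitsOfSize_shrink _

/-- `X⁎ ⊗ Q` is the coproduct of the `tpow X n ⊗ Q`. -/
noncomputable def starTensorIsColimit (X Q : D) :
    IsColimit ((tensorRight Q).mapCocone (colimit.cocone (Discrete.functor (tpow X)))) :=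
  haveI := tensorRight_preservesColimits (D := D) Q
  isColimitOfPreserves _ (colimit.isColimit _)

lemma star_tensor_hom_ext {X Q Z : D} {g h : Xstar X ⊗ Q ⟶ Z}
    (w : ∀ n : ℕ, (Sigma.ι (tpow X) n ▷ Q) ≫ g = (Sigma.ι (tpow X) n ▷ Q) ≫ h) :
    g = h := by
  refine (starTensorIsColimit X Q).hom_ext (fun ⟨n⟩ => ?_)
  simpa using w n

/-- Descent out of `X⁎ ⊗ Q` with prescribed components. -/
noncomputable def sdesc {X Q Z : D} (g : ∀ n : ℕ, tpow X n ⊗ Q ⟶ Z) :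
    Xstar X ⊗ Q ⟶ Z :=
  (starTensorIsColimit X Q).desc ⟨Z, Discrete.natTrans fun n => g n.as⟩

@[simp]
lemma sdesc_ι {X Q Z : D} (g : ∀ n : ℕ, tpow X n ⊗ Q ⟶ Z) (n : ℕ) :
    (Sigma.ι (tpow X) n ▷ Q) ≫ sdesc g = g n := by
  have h := (starTensorIsColimit X Q).fac ⟨Z, Discrete.natTrans fun n => g n.as⟩ ⟨n⟩
  simp at h
  exact h

lemma iota_congr {f : ℕ → D} {i j : ℕ} (h : i = j) :
    Sigma.ι f i = eqToHom (by rw [h]) ≫ Sigma.ι f j := by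
  subst h; simp

/-- The components of the canonical "cons" morphism `X⁎ ⊗ X ⟶ X⁎`. -/
lemma iota_whiskerRight_cons (X : D) (mX : Xstar X ⊗ Xstar X ⟶ Xstar X)
    (hmX : ∀ n k : ℕ,
      (Sigma.ι (tpow X) n ⊗ₘ Sigma.ι (tpow X) k) ≫ mX =
        (tpowAdd X n k).hom ≫ Sigma.ι (tpow X) (n + k)) (n : ℕ) :
    (Sigma.ι (tpow X) n ▷ X) ≫ (β_ (Xstar X) X).hom ≫ (etaX X ▷ Xstar X) ≫ mX =
      (β_ (tpow X n) X).hom ≫ Sigma.ι (tpow X) (n + 1) := by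
  rw [BraidedCategory.braiding_naturality_left_assoc]
  congr 1
  rw [whisker_exchange_assoc, etaX]
  have h1 := hmX 1 n
  rw [MonoidalCategory.tensorHom_def, Category.assoc] at h1
  erw [comp_whiskerRight, Category.assoc, h1]
  have htri : ((ρ_ X).inv ▷ tpow X n) ≫ (tpowAdd X 1 n).hom ≫
      Sigma.ι (tpow X) (1 + n) = Sigma.ι (tpow X) (n + 1) := by
    rw [iota_congr (f := tpow X) (Nat.add_comm 1 n)]
    simp [tpowAdd, tpow]
    erw [eqToHom_trans_assoc, eqToHom_refl, Category.id_comp]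
  exact htri

/-- The components of an anamorphism into `[X⁎, Y]` from a coalgebra
with output `o` and transition `t`. -/
noncomputable def fcomp {X Q : D} (Y : D) (o : Q ⟶ Y) (t : Q ⟶ (ihom X).obj Q) :
    ∀ n : ℕ, tpow X n ⊗ Q ⟶ Y
  | 0 => (λ_ Q).hom ≫ o
  | n + 1 =>
      ((β_ (tpow X n) X).inv ▷ Q) ≫ (α_ (tpow X n) X Q).hom ≫
        (tpow X n ◁ uncurry t) ≫ fcomp Y o t n

/-- The `n`-th component of the double-uncurried transition morphism,
precomposed with a morphism `u : Q ⟶ [X⁎, Y]`. -/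
lemma psi_component (X Y : D) (mX : Xstar X ⊗ Xstar X ⟶ Xstar X)
    (hmX : ∀ n k : ℕ,
      (Sigma.ι (tpow X) n ⊗ₘ Sigma.ι (tpow X) k) ≫ mX =
        (tpowAdd X n k).hom ≫ Sigma.ι (tpow X) (n + k))
    {Q : D} (u : Q ⟶ (ihom (Xstar X)).obj Y) (n : ℕ) :
    (Sigma.ι (tpow X) n ▷ (X ⊗ Q)) ≫ (Xstar X ◁ (X ◁ u)) ≫
        (α_ (Xstar X) X ((ihom (Xstar X)).obj Y)).inv ≫
        (((β_ (Xstar X) X).hom ≫ (etaX X ▷ Xstar X) ≫ mX) ▷ (ihom (Xstar X)).obj Y) ≫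
        (ihom.ev (Xstar X)).app Y =
      (α_ (tpow X n) X Q).inv ≫ ((β_ (tpow X n) X).hom ▷ Q) ≫
        (Sigma.ι (tpow X) (n + 1) ▷ Q) ≫ uncurry u := by
  rw [← MonoidalCategory.whisker_exchange_assoc]
  rw [associator_inv_naturality_left_assoc]
  rw [← comp_whiskerRight_assoc, iota_whiskerRight_cons X mX hmX n]
  erw [comp_whiskerRight]
  erw [Category.assoc]
  rw [associator_inv_naturality_right_assoc]
  erw [MonoidalCategory.whisker_exchange_assoc]
  erw [MonoidalCategory.whisker_exchange_assoc]
  erw [← uncurry_eq]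
  rfl

/-- Characterization of the transition-compatibility condition in terms of
components of the uncurried morphism. -/
lemma transition_iff (X Y : D) (mX : Xstar X ⊗ Xstar X ⟶ Xstar X)
    (hmX : ∀ n k : ℕ,
      (Sigma.ι (tpow X) n ⊗ₘ Sigma.ι (tpow X) k) ≫ mX =
        (tpowAdd X n k).hom ≫ Sigma.ι (tpow X) (n + k))
    {Q : D} (t : Q ⟶ (ihom X).obj Q) (u : Q ⟶ (ihom (Xstar X)).obj Y) :
    u ≫ curry (curry
        ((α_ (Xstar X) X ((ihom (Xstar X)).obj Y)).inv ≫
          (((β_ (Xstar X) X).hom ≫ (etaX X ▷ Xstar X) ≫ mX) ▷ (ihom (Xstar X)).obj Y) ≫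
          (ihom.ev (Xstar X)).app Y)) = t ≫ (ihom X).map u ↔
      ∀ n : ℕ, (Sigma.ι (tpow X) (n + 1) ▷ Q) ≫ uncurry u =
        ((β_ (tpow X n) X).inv ▷ Q) ≫ (α_ (tpow X n) X Q).hom ≫
          (tpow X n ◁ uncurry t) ≫ (Sigma.ι (tpow X) n ▷ Q) ≫ uncurry u := by
  have equ : ∀ v w : Q ⟶ (ihom X).obj ((ihom (Xstar X)).obj Y),
      v = w ↔ uncurry (uncurry v) = uncurry (uncurry w) := by
    intro v w
    constructor
    · intro h; rw [h]
    · intro h; exact uncurry_injective (uncurry_injective h)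
  rw [equ]
  rw [uncurry_natural_left, uncurry_curry, uncurry_natural_right,
    uncurry_natural_left, uncurry_natural_left]
  rw [uncurry_curry]
  constructor
  · intro h n
    have h3 := congrArg (fun v => (Sigma.ι (tpow X) n ▷ (X ⊗ Q)) ≫ v) h
    rw [psi_component X Y mX hmX u n] at h3
    erw [← MonoidalCategory.whisker_exchange_assoc (f := Sigma.ι (tpow X) n) (g := uncurry t)] at h3
    -- h3 : α⁻¹ ≫ (β ▷ Q) ≫ (ι(n+1) ▷ Q) ≫ uncurry u
    --        = (Xⁿ ◁ uncurry t) ≫ (ιₙ ▷ Q) ≫ uncurry u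
    erw [← h3]
    simp
    rfl
  · intro h
    apply star_tensor_hom_ext (X := X) (Q := X ⊗ Q)
    intro n
    rw [psi_component X Y mX hmX u n]
    rw [← MonoidalCategory.whisker_exchange_assoc]
    erw [h n]
    simp [← MonoidalCategory.comp_whiskerRight_assoc]

/-- Precomposition with `u` of the "output" morphism of the terminal coalgebra. -/
lemma out_char (X Y : D) {Q : D} (u : Q ⟶ (ihom (Xstar X)).obj Y) :
    u ≫ (λ_ ((ihom (Xstar X)).obj Y)).inv ≫ (iX X ▷ (ihom (Xstar X)).obj Y) ≫
        (ihom.ev (Xstar X)).app Y =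
      (λ_ Q).inv ≫ (Sigma.ι (tpow X) 0 ▷ Q) ≫ uncurry u := by
  rw [uncurry_eq]
  rw [leftUnitor_inv_naturality_assoc]
  rw [MonoidalCategory.whisker_exchange_assoc, iX]
  rfl

end Aux

/-- Let `m_X` be the multiplication of the free monoid object `X⁎`
(characterized by having the `(n+k)`-th coproduct injection as its `(n,k)`-component).
Then the endofunctor `T Q = Y × [X, Q]` has a terminal coalgebra carried by the
internal hom `[X⁎, Y]`, whose output component is evaluation at the unit `i_X`
and whose transition component is the double currying of
`ev ∘ ([X⁎,Y] ⊗ m_X) ∘ ([X⁎,Y] ⊗ η_X ⊗ X⁎)`. -/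
theorem ihom_Xstar_isTerminal_coalgebra (X Y : D)
    (mX : Xstar X ⊗ Xstar X ⟶ Xstar X)
    (hmX : ∀ n k : ℕ,
      (Sigma.ι (tpow X) n ⊗ₘ Sigma.ι (tpow X) k) ≫ mX =
        (tpowAdd X n k).hom ≫ Sigma.ι (tpow X) (n + k)) :
    Nonempty (IsTerminal
      (⟨(ihom (Xstar X)).obj Y,
        prod.lift
          -- output: evaluation at the unit `i_X : I ⟶ X⁎`
          ((λ_ ((ihom (Xstar X)).obj Y)).inv ≫ (iX X ▷ (ihom (Xstar X)).obj Y) ≫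
            (ihom.ev (Xstar X)).app Y)
          -- transition: double currying of `ev ∘ (H ⊗ m_X) ∘ (H ⊗ η_X ⊗ X⁎)`
          (curry (curry
            ((α_ (Xstar X) X ((ihom (Xstar X)).obj Y)).inv ≫
              ((β_ (Xstar X) X).hom ▷ (ihom (Xstar X)).obj Y) ≫
              ((etaX X ▷ Xstar X) ▷ (ihom (Xstar X)).obj Y) ≫
              (mX ▷ (ihom (Xstar X)).obj Y) ≫
              (ihom.ev (Xstar X)).app Y)))⟩ :
        Endofunctor.Coalgebra (Tfun X Y))) := by
  have hτ : curry (curry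
      ((α_ (Xstar X) X ((ihom (Xstar X)).obj Y)).inv ≫
        ((β_ (Xstar X) X).hom ▷ (ihom (Xstar X)).obj Y) ≫
        ((etaX X ▷ Xstar X) ▷ (ihom (Xstar X)).obj Y) ≫
        (mX ▷ (ihom (Xstar X)).obj Y) ≫
        (ihom.ev (Xstar X)).app Y)) = curry (curry
      ((α_ (Xstar X) X ((ihom (Xstar X)).obj Y)).inv ≫
        (((β_ (Xstar X) X).hom ≫ (etaX X ▷ Xstar X) ≫ mX) ▷ (ihom (Xstar X)).obj Y) ≫
        (ihom.ev (Xstar X)).app Y)) := by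
    simp
  rw [hτ]
  constructor
  refine IsTerminal.ofUniqueHom
    (fun V => ⟨curry (sdesc (fcomp Y (V.str ≫ prod.fst) (V.str ≫ prod.snd))), ?_⟩)
    (fun V m => ?_)
  · -- the anamorphism is a coalgebra homomorphism
    apply Limits.prod.hom_ext
    · erw [Tfun_map, Category.assoc, Category.assoc, prod.map_fst, Category.comp_id, prod.lift_fst]
      erw [out_char]
      rw [uncurry_curry]
      erw [sdesc_ι]
      show V.str ≫ prod.fst = (λ_ V.V).inv ≫ (λ_ V.V).hom ≫ V.str ≫ prod.fst
      rw [Iso.inv_hom_id_assoc]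
    · erw [Tfun_map, Category.assoc, Category.assoc, prod.map_snd, prod.lift_snd]
      erw [← Category.assoc V.str prod.snd]
      rw [eq_comm]
      refine (transition_iff X Y mX hmX (V.str ≫ prod.snd) _).mpr (fun n => ?_)
      rw [uncurry_curry, sdesc_ι, sdesc_ι]
      rfl
  · -- uniqueness
    have hm := m.h
    have hout : V.str ≫ prod.fst =
        m.f ≫ (λ_ ((ihom (Xstar X)).obj Y)).inv ≫ (iX X ▷ (ihom (Xstar X)).obj Y) ≫
          (ihom.ev (Xstar X)).app Y := by
      have := congrArg (fun v => v ≫ prod.fst) hm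
      erw [Tfun_map, Category.assoc, Category.assoc, prod.map_fst, Category.comp_id, prod.lift_fst] at this
      exact this
    have htr : V.str ≫ prod.snd ≫ (ihom X).map m.f = m.f ≫ curry (curry
        ((α_ (Xstar X) X ((ihom (Xstar X)).obj Y)).inv ≫
          (((β_ (Xstar X) X).hom ≫ (etaX X ▷ Xstar X) ≫ mX) ▷ (ihom (Xstar X)).obj Y) ≫
          (ihom.ev (Xstar X)).app Y)) := by
      have := congrArg (fun v => v ≫ prod.snd) hm
      erw [Tfun_map, Category.assoc, Category.assoc, prod.map_snd, prod.lift_snd] at this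
      exact this
    have hcomp : ∀ n : ℕ, (Sigma.ι (tpow X) n ▷ V.V) ≫ uncurry m.f =
        fcomp Y (V.str ≫ prod.fst) (V.str ≫ prod.snd) n := by
      intro n
      induction n with
      | zero =>
        rw [out_char] at hout
        rw [Iso.eq_inv_comp] at hout
        · exact hout.symm
      | succ n ih =>
        have key := (transition_iff X Y mX hmX (V.str ≫ prod.snd) m.f).mp
          (by rw [← htr]; erw [Category.assoc]) n
        rw [key, ih]
        rfl
    apply Endofunctor.Coalgebra.ext
    show m.f = curry (sdesc (fcomp Y (V.str ≫ prod.fst) (V.str ≫ prod.snd)))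
    have hu : uncurry m.f = sdesc (fcomp Y (V.str ≫ prod.fst) (V.str ≫ prod.snd)) :=
      star_tensor_hom_ext (fun n => by rw [hcomp n, sdesc_ι])
    rw [← curry_uncurry m.f, hu]
end

section
/- Let a : A → A' and b : B → B' be surjective functions between types. Then the commutative square with top-left corner A × B, formed by the maps a × id_B : A × B → A' × B, id_A × b : A × B → A × B', a × id_{B'} : A × B' → A' × B' and id_{A'} × b : A' × B → A' × B', is a pushout square in the category of types (equivalently, A' × B' with the maps id_{A'} × b and a × id_{B'} is the pushout of a × id_B and id_A × b). -/
open CategoryTheory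

universe u

/-- For surjective functions `a : A → A'` and `b : B → B'`, the square
```
          a × id
   A × B -------> A' × B
     |              |
id×b |              | id × b
     v              v
   A × B' ------> A' × B'
          a × id
```
is a pushout square in the category of types. -/
theorem prodMap_isPushout_types {A A' B B' : Type u}
    (a : A → A') (b : B → B')
    (ha : Function.Surjective a) (hb : Function.Surjective b) :
    IsPushout (C := Type u)
      (TypeCat.ofHom (Prod.map a (id : B → B))) (TypeCat.ofHom (Prod.map (id : A → A) b))
      (TypeCat.ofHom (Prod.map (id : A' → A') b)) (TypeCat.ofHom (Prod.map a (id : B' → B'))) := by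
  have key : ∀ {W : Type u} (p : A' × B → W) (q : A × B' → W),
      (∀ (x : A) (y : B), p (a x, y) = q (x, b y)) →
      ∀ (a' : A') (y y' : B), b y = b y' → p (a', y) = p (a', y') := by
    intro W p q h a' y y' hy
    obtain ⟨x, rfl⟩ := ha a'
    rw [h, hy, ← h]
  have w : CommSq (C := Type u)
      (TypeCat.ofHom (Prod.map a (id : B → B))) (TypeCat.ofHom (Prod.map (id : A → A) b))
      (TypeCat.ofHom (Prod.map (id : A' → A') b)) (TypeCat.ofHom (Prod.map a (id : B' → B'))) := ⟨by apply ConcreteCategory.hom_ext; intro z; rfl⟩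
  refine ⟨w, ⟨Limits.PushoutCocone.IsColimit.mk w.w
    (fun s => TypeCat.ofHom fun z => s.inl (z.1, (hb z.2).choose)) ?_ ?_ ?_⟩⟩
  · intro s
    apply ConcreteCategory.hom_ext; intro z
    have h : ∀ (x : A) (y : B), s.inl (a x, y) = s.inr (x, b y) :=
      fun x y => types_congr_hom s.condition (x, y)
    exact key s.inl s.inr h z.1 _ z.2 (hb (b z.2)).choose_spec
  · intro s
    apply ConcreteCategory.hom_ext; intro z
    have h : ∀ (x : A) (y : B), s.inl (a x, y) = s.inr (x, b y) :=
      fun x y => types_congr_hom s.condition (x, y)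
    dsimp [Prod.map]
    rw [h]
    rw [(hb z.2).choose_spec]
  · intro s m hinl hinr
    apply ConcreteCategory.hom_ext; intro z
    have := types_congr_hom hinl (z.1, (hb z.2).choose)
    dsimp [Prod.map] at this ⊢
    rw [← this, (hb z.2).choose_spec]
end

section
/- Let a : A → A' and b : B → B' be surjective monotone maps between partial orders. Then the commutative square in the category of partial orders and monotone maps, with top-left corner the product poset A × B, formed by the monotone maps a × id_B : A × B → A' × B, id_A × b : A × B → A × B', a × id_{B'} : A × B' → A' × B' and id_{A'} × b : A' × B → A' × B', is a pushout square; in particular the pushout of a × id_B and id_A × b is the product poset A' × B' with the product (componentwise) order. -/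
open CategoryTheory Limits

universe u
section
variable {A A' B B' : Type u}
    [PartialOrder A] [PartialOrder A'] [PartialOrder B] [PartialOrder B']
    (a : A →o A') (b : B →o B')
    (ha : Function.Surjective a) (hb : Function.Surjective b)
    {W : Type u} [PartialOrder W]
    (f : A' × B →o W) (g : A × B' →o W)
    (hfg : ∀ x y, f (a x, y) = g (x, b y))

include ha hfg in
-- key: f (a', y) only depends on b y
lemma descKey (a' : A') (y y' : B) (h : b y = b y') : f (a', y) = f (a', y') := by
  obtain ⟨x, rfl⟩ := ha a'
  rw [hfg, hfg, h]

include hfg in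
noncomputable def descHom : A' × B' →o W where
  toFun p := f (p.1, Function.surjInv hb p.2)
  monotone' := by
    rintro ⟨a1, b1⟩ ⟨a2, b2⟩ ⟨h1, h2⟩
    dsimp at *
    obtain ⟨x2, hx2⟩ := ha a2
    calc f (a1, Function.surjInv hb b1) ≤ f (a2, Function.surjInv hb b1) :=
          f.monotone ⟨h1, le_rfl⟩
      _ = g (x2, b1) := by
          rw [← hx2, hfg, Function.surjInv_eq hb]
      _ ≤ g (x2, b2) := g.monotone ⟨le_rfl, h2⟩
      _ = f (a2, Function.surjInv hb b2) := by
          rw [← hx2, hfg, Function.surjInv_eq hb]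

lemma descHom_spec (a' : A') (y : B) : descHom a b ha hb f g hfg (a', b y) = f (a', y) :=
  descKey a b ha f g hfg a' _ y (Function.surjInv_eq hb _)
end

/-- For surjective monotone maps `a : A → A'` and `b : B → B'`
between partial orders, the square
```
            a × id
   A × B ---------> A' × B
     |                |
id×b |                | id × b
     v                v
   A × B' --------> A' × B'
            a × id
```
(with all products carrying the componentwise order) is a pushout square in the
category of partial orders and monotone maps. -/
theorem prodMap_isPushout_partOrd {A A' B B' : Type u}
    [PartialOrder A] [PartialOrder A'] [PartialOrder B] [PartialOrder B']
    (a : A →o A') (b : B →o B')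
    (ha : Function.Surjective a) (hb : Function.Surjective b) :
    IsPushout (C := PartOrd.{u})
      (Z := PartOrd.of (A × B)) (X := PartOrd.of (A' × B))
      (Y := PartOrd.of (A × B')) (P := PartOrd.of (A' × B'))
      (PartOrd.ofHom (a.prodMap (OrderHom.id : B →o B)))
      (PartOrd.ofHom ((OrderHom.id : A →o A).prodMap b))
      (PartOrd.ofHom ((OrderHom.id : A' →o A').prodMap b))
      (PartOrd.ofHom (a.prodMap (OrderHom.id : B' →o B'))) := by
  refine IsPushout.of_isColimit' ⟨rfl⟩ (PushoutCocone.IsColimit.mk _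
    (fun s => PartOrd.ofHom (descHom a b ha hb s.inl.hom s.inr.hom
      (fun x y => congrFun (congrArg (fun h => h.hom.toFun) s.condition) (x, y)))) ?_ ?_ ?_)
  · intro s
    apply PartOrd.ext
    rintro ⟨a', y⟩
    exact descHom_spec a b ha hb s.inl.hom s.inr.hom
      (fun x y => congrFun (congrArg (fun h => h.hom.toFun) s.condition) (x, y)) a' y
  · intro s
    apply PartOrd.ext
    rintro ⟨x, b'⟩
    obtain ⟨y, rfl⟩ := hb b'
    have h2 := descHom_spec a b ha hb s.inl.hom s.inr.hom
      (fun x y => congrFun (congrArg (fun h => h.hom.toFun) s.condition) (x, y)) (a x) y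
    exact h2.trans (congrFun (congrArg (fun h => h.hom.toFun) s.condition) (x, y))
  · intro s m hl hr
    apply PartOrd.ext
    rintro ⟨a', b'⟩
    obtain ⟨y, rfl⟩ := hb b'
    have h1 := congrFun (congrArg (fun h => h.hom.toFun) hl) (a', y)
    have h2 := descHom_spec a b ha hb s.inl.hom s.inr.hom
      (fun x y => congrFun (congrArg (fun h => h.hom.toFun) s.condition) (x, y)) a' y
    exact h1.trans h2.symm
end

section
/- Let D be a symmetric monoidal closed category and E a class of epimorphisms of D containing all isomorphisms and closed under composition, such that D is stable with respect to E. Let (e_i : D₀ → D_i)_{i ∈ I} be a family of morphisms in E that has a wide pushout in D given by a cocone (ē_i : D_i → D̄)_{i ∈ I} with common composite e = ē_i ∘ e_i, and suppose each ē_i belongs to E. Then the family (e_i ⊗ e_i : D₀ ⊗ D₀ → D_i ⊗ D_i)_{i ∈ I} has a wide pushout in D given by the cocone (ē_i ⊗ ē_i : D_i ⊗ D_i → D̄ ⊗ D̄)_{i ∈ I} with common composite e ⊗ e. -/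
open CategoryTheory CategoryTheory.Limits CategoryTheory.MonoidalCategory

universe w v u

/-- A cocone `(g i : B i ⟶ P, g₀ : A ⟶ P)` is a wide pushout of the family
`f i : A ⟶ B i` if it commutes and satisfies the universal property of the colimit
of the wide span. -/
def IsWidePushout {C : Type u} [Category.{v} C] {ι : Type w} {A : C} {B : ι → C} {P : C}
    (f : ∀ i, A ⟶ B i) (g : ∀ i, B i ⟶ P) (g₀ : A ⟶ P) : Prop :=
  (∀ i, f i ≫ g i = g₀) ∧
    ∀ ⦃Z : C⦄ (c₀ : A ⟶ Z) (c : ∀ i, B i ⟶ Z), (∀ i, f i ≫ c i = c₀) →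
      ∃! w : P ⟶ Z, g₀ ≫ w = c₀ ∧ ∀ i, g i ≫ w = c i

/-- The legs of a wide pushout (including the composite from the common domain) are
jointly epimorphic. -/
lemma IsWidePushout.hom_ext' {C : Type u} [Category.{v} C] {ι : Type w} {A : C} {B : ι → C}
    {P : C} {f : ∀ i, A ⟶ B i} {g : ∀ i, B i ⟶ P} {g₀ : A ⟶ P}
    (h : IsWidePushout f g g₀) {Z : C} {p q : P ⟶ Z}
    (h₀ : g₀ ≫ p = g₀ ≫ q) (hi : ∀ i, g i ≫ p = g i ≫ q) : p = q := by
  obtain ⟨w, -, hu⟩ := h.2 (g₀ ≫ p) (fun i => g i ≫ p)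
    (fun i => by rw [← Category.assoc, h.1 i])
  rw [hu p ⟨rfl, fun i => rfl⟩, hu q ⟨h₀.symm, fun i => (hi i).symm⟩]

/-- A left adjoint functor preserves wide pushouts. -/
lemma IsWidePushout.map {C₁ : Type*} {C₂ : Type*} [Category C₁] [Category C₂]
    (F : C₁ ⥤ C₂) (G : C₂ ⥤ C₁) (adj : F ⊣ G)
    {ι : Type w} {A : C₁} {B : ι → C₁} {P : C₁}
    {f : ∀ i, A ⟶ B i} {g : ∀ i, B i ⟶ P} {g₀ : A ⟶ P}
    (h : IsWidePushout f g g₀) :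
    IsWidePushout (fun i => F.map (f i)) (fun i => F.map (g i)) (F.map g₀) := by
  constructor
  · intro i; rw [← F.map_comp, h.1 i]
  · intro Z c₀ c hc
    obtain ⟨w, ⟨hw₀, hwi⟩, hu⟩ := h.2 (adj.homEquiv _ _ c₀) (fun i => adj.homEquiv _ _ (c i))
      (fun i => by rw [← adj.homEquiv_naturality_left, hc])
    refine ⟨(adj.homEquiv _ _).symm w, ⟨?_, fun i => ?_⟩, fun y hy => ?_⟩
    · apply (adj.homEquiv _ _).injective
      rw [adj.homEquiv_naturality_left, Equiv.apply_symm_apply, hw₀]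
    · apply (adj.homEquiv _ _).injective
      rw [adj.homEquiv_naturality_left, Equiv.apply_symm_apply, hwi i]
    · have := hu (adj.homEquiv _ _ y)
        ⟨by rw [← adj.homEquiv_naturality_left, hy.1],
         fun i => by rw [← adj.homEquiv_naturality_left, hy.2 i]⟩
      rw [← this, Equiv.symm_apply_apply]

variable {D : Type u} [Category.{v} D] [MonoidalCategory D] [SymmetricCategory D]
  [MonoidalClosed D]

/-- In a symmetric monoidal closed category, left whiskering preserves wide pushouts. -/
lemma IsWidePushout.whiskerLeft (X : D)
    {ι : Type w} {A : D} {B : ι → D} {P : D}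
    {f : ∀ i, A ⟶ B i} {g : ∀ i, B i ⟶ P} {g₀ : A ⟶ P}
    (h : IsWidePushout f g g₀) :
    IsWidePushout (fun i => X ◁ f i) (fun i => X ◁ g i) (X ◁ g₀) := by
  simpa using h.map (tensorLeft X) (ihom X) (ihom.adjunction X)

/-- In a symmetric monoidal closed category, right whiskering preserves wide pushouts. -/
lemma IsWidePushout.whiskerRight (X : D)
    {ι : Type w} {A : D} {B : ι → D} {P : D}
    {f : ∀ i, A ⟶ B i} {g : ∀ i, B i ⟶ P} {g₀ : A ⟶ P}
    (h : IsWidePushout f g g₀) :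
    IsWidePushout (fun i => f i ▷ X) (fun i => g i ▷ X) (g₀ ▷ X) := by
  simpa using h.map (tensorRight X) (ihom X)
    ((ihom.adjunction X).ofNatIsoLeft
      (NatIso.ofComponents (fun Y => β_ X Y) (by aesop_cat)))

/-- `D` is stable with respect to a class `E` of morphisms if for all `a, b` in `E`
the square formed by `a ⊗ B`, `A ⊗ b`, `A' ⊗ b`, `a ⊗ B'` is a pushout. -/
def StableWrt (E : MorphismProperty D) : Prop :=
  ∀ {A A' B B' : D} (a : A ⟶ A') (b : B ⟶ B'), E a → E b →
    IsPushout (a ▷ B) (A ◁ b) (A' ◁ b) (a ▷ B')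

/-- Let `E` be a class of epimorphisms of a symmetric monoidal closed
category `D`, containing all isomorphisms and closed under composition, with `D` stable
w.r.t. `E`.  If the family `(e i : D₀ ⟶ Di i)` of `E`-morphisms has a wide pushout
`(ē i : Di i ⟶ D̄, e₀)` whose components `ē i` lie in `E`, then the family
`(e i ⊗ e i)` has a wide pushout given by `(ē i ⊗ ē i, e₀ ⊗ e₀)`. -/
theorem isWidePushout_tensor (E : MorphismProperty D)
    (hepi : ∀ {A B : D} (f : A ⟶ B), E f → Epi f)
    (hiso : ∀ {A B : D} (f : A ⟶ B), IsIso f → E f)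
    (hcomp : ∀ {A B C : D} (f : A ⟶ B) (g : B ⟶ C), E f → E g → E (f ≫ g))
    (hstable : StableWrt E)
    {ι : Type w} {D₀ : D} {Di : ι → D}
    (e : ∀ i, D₀ ⟶ Di i) (he : ∀ i, E (e i))
    {Dbar : D} (ebar : ∀ i, Di i ⟶ Dbar) (e₀ : D₀ ⟶ Dbar)
    (hbar : ∀ i, E (ebar i))
    (hwp : IsWidePushout e ebar e₀) :
    IsWidePushout (fun i => e i ⊗ₘ e i) (fun i => ebar i ⊗ₘ ebar i) (e₀ ⊗ₘ e₀) := by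
  -- the binary pushout squares coming from stability
  have sq : ∀ i j, IsPushout (e i ▷ D₀) (D₀ ◁ e j) (Di i ◁ e j) (e i ▷ Di j) :=
    fun i j => hstable (e i) (e j) (he i) (he j)
  constructor
  · intro i
    rw [tensorHom_comp_tensorHom, hwp.1 i]
  · intro Z c₀ c hc'beta
    have hc : ∀ i, (e i ⊗ₘ e i) ≫ c i = c₀ := hc'beta
    -- Step 1: off-diagonal maps `c' i j : Di i ⊗ Di j ⟶ Z`
    have hcomm : ∀ i j, (e i ▷ D₀) ≫ (Di i ◁ e i) ≫ c i
        = (D₀ ◁ e j) ≫ (e j ▷ Di j) ≫ c j := by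
      intro i j
      rw [← Category.assoc, ← Category.assoc, ← MonoidalCategory.tensorHom_def, ← tensorHom_def', hc i, hc j]
    set c' : ∀ i j, Di i ⊗ Di j ⟶ Z :=
      fun i j => (sq i j).desc ((Di i ◁ e i) ≫ c i) ((e j ▷ Di j) ≫ c j) (hcomm i j) with hc'
    have hc'₁ : ∀ i j, (Di i ◁ e j) ≫ c' i j = (Di i ◁ e i) ≫ c i :=
      fun i j => (sq i j).inl_desc _ _ _
    have hc'₂ : ∀ i j, (e i ▷ Di j) ≫ c' i j = (e j ▷ Di j) ≫ c j :=
      fun i j => (sq i j).inr_desc _ _ _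
    have hc'diag : ∀ i, c' i i = c i := by
      intro i
      refine (sq i i).hom_ext ?_ ?_
      · rw [hc'₁ i i]
      · rw [hc'₂ i i]
    -- Step 2: the maps `u i : Di i ⊗ Dbar ⟶ Z`
    obtain ⟨u, hu⟩ :
        ∃ u : ∀ i, Di i ⊗ Dbar ⟶ Z, ∀ i,
          ((Di i ◁ e₀) ≫ u i = (Di i ◁ e i) ≫ c i ∧ ∀ j, (Di i ◁ ebar j) ≫ u i = c' i j) ∧
          ∀ y, ((Di i ◁ e₀) ≫ y = (Di i ◁ e i) ≫ c i ∧ ∀ j, (Di i ◁ ebar j) ≫ y = c' i j)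
            → y = u i := by
      have := fun i => (hwp.whiskerLeft (Di i)).2 ((Di i ◁ e i) ≫ c i) (c' i) (hc'₁ i)
      choose u h₁ h₂ using this
      exact ⟨u, fun i => ⟨h₁ i, h₂ i⟩⟩
    -- Step 3: the map `v : D₀ ⊗ Dbar ⟶ Z`
    obtain ⟨v, ⟨hv₀, hvj⟩, -⟩ := (hwp.whiskerLeft D₀).2 c₀ (fun j => (e j ▷ Di j) ≫ c j)
      (fun j => by rw [← Category.assoc, ← tensorHom_def', hc j])
    have hvu : ∀ i, (e i ▷ Dbar) ≫ u i = v := by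
      intro i
      refine (hwp.whiskerLeft D₀).hom_ext' ?_ ?_
      · rw [← Category.assoc, whisker_exchange, Category.assoc, (hu i).1.1,
          ← Category.assoc, ← MonoidalCategory.tensorHom_def, hc i, hv₀]
      · intro j
        rw [← Category.assoc, whisker_exchange, Category.assoc, (hu i).1.2 j, hc'₂ i j, hvj j]
    -- Step 4: construct `w`
    obtain ⟨w, ⟨hw₀, hwi⟩, hwu⟩ := (hwp.whiskerRight Dbar).2 v u hvu
    refine ⟨w, ⟨?_, fun i => ?_⟩, fun y hy => ?_⟩
    · rw [tensorHom_def', Category.assoc, hw₀, hv₀]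
    · show (ebar i ⊗ₘ ebar i) ≫ w = c i
      rw [tensorHom_def', Category.assoc, hwi i, (hu i).1.2 i, hc'diag i]
    · -- uniqueness
      have hy2 : ∀ i, (ebar i ⊗ₘ ebar i) ≫ y = c i := hy.2
      refine hwu y ⟨?_, fun i => ?_⟩
      · -- `(e₀ ▷ Dbar) ≫ y = v`
        refine (hwp.whiskerLeft D₀).hom_ext' ?_ fun j => ?_
        · rw [← Category.assoc, ← tensorHom_def', hy.1, hv₀]
        · show D₀ ◁ ebar j ≫ (e₀ ▷ Dbar ≫ y) = D₀ ◁ ebar j ≫ v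
          calc D₀ ◁ ebar j ≫ (e₀ ▷ Dbar ≫ y)
              = e₀ ▷ Di j ≫ Dbar ◁ ebar j ≫ y := by
                rw [← Category.assoc, ← Category.assoc, whisker_exchange]
            _ = e j ▷ Di j ≫ (ebar j ⊗ₘ ebar j) ≫ y := by
                rw [← hwp.1 j, comp_whiskerRight, MonoidalCategory.tensorHom_def]
                simp only [Category.assoc]
            _ = D₀ ◁ ebar j ≫ v := by rw [hy2 j, hvj j]
      · -- `(ebar i ▷ Dbar) ≫ y = u i`
        refine (hu i).2 _ ⟨?_, fun j => ?_⟩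
        · calc Di i ◁ e₀ ≫ (ebar i ▷ Dbar ≫ y)
              = Di i ◁ e i ≫ (ebar i ⊗ₘ ebar i) ≫ y := by
                rw [← hwp.1 i, MonoidalCategory.whiskerLeft_comp, tensorHom_def']
                simp only [Category.assoc]
            _ = Di i ◁ e i ≫ c i := by rw [hy2 i]
        · have key : ebar i ▷ Di j ≫ Dbar ◁ ebar j ≫ y = c' i j := by
            refine (sq i j).hom_ext ?_ ?_
            · calc Di i ◁ e j ≫ ebar i ▷ Di j ≫ Dbar ◁ ebar j ≫ y
                  = ebar i ▷ D₀ ≫ Dbar ◁ (e j ≫ ebar j) ≫ y := by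
                    rw [← Category.assoc, ← Category.assoc, whisker_exchange,
                      MonoidalCategory.whiskerLeft_comp]
                    simp only [Category.assoc]
                _ = ebar i ▷ D₀ ≫ Dbar ◁ (e i ≫ ebar i) ≫ y := by
                    rw [hwp.1 j, hwp.1 i]
                _ = Di i ◁ e i ≫ (ebar i ⊗ₘ ebar i) ≫ y := by
                    rw [MonoidalCategory.whiskerLeft_comp, ← Category.assoc, ← Category.assoc,
                      ← whisker_exchange, MonoidalCategory.tensorHom_def]
                    simp only [Category.assoc]
                _ = Di i ◁ e j ≫ c' i j := by rw [hy2 i, hc'₁ i j]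
            · calc e i ▷ Di j ≫ ebar i ▷ Di j ≫ Dbar ◁ ebar j ≫ y
                  = (e i ≫ ebar i) ▷ Di j ≫ Dbar ◁ ebar j ≫ y := by
                    rw [comp_whiskerRight, Category.assoc]
                _ = (e j ≫ ebar j) ▷ Di j ≫ Dbar ◁ ebar j ≫ y := by
                    rw [hwp.1 i, hwp.1 j]
                _ = e j ▷ Di j ≫ (ebar j ⊗ₘ ebar j) ≫ y := by
                    rw [comp_whiskerRight, MonoidalCategory.tensorHom_def]
                    simp only [Category.assoc]
                _ = e i ▷ Di j ≫ c' i j := by rw [hy2 j, hc'₂ i j]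
          calc Di i ◁ ebar j ≫ (ebar i ▷ Dbar ≫ y)
              = ebar i ▷ Di j ≫ Dbar ◁ ebar j ≫ y := by
                rw [← Category.assoc, ← Category.assoc, whisker_exchange]
            _ = c' i j := key
end

section
/- Let D be a symmetric monoidal closed category and E a class of epimorphisms of D containing all isomorphisms and closed under composition, such that D is stable with respect to E and E is closed under wide pushouts and under tensor products. Then the forgetful functor from the category of monoid objects in D to D creates wide pushouts of E-carried morphisms: given monoid objects (D₀, μ, η) and (D_i, μ_i, η_i) and monoid morphisms e_i : D₀ → D_i (i ∈ I) whose underlying D-morphisms lie in E and have a wide pushout (ē_i : D_i → D̄, e : D₀ → D̄) in D, there is a unique monoid object structure (D̄, μ̄, η̄) on D̄ making e and all ē_i monoid morphisms, and with this structure the cocone (ē_i, e) is a wide pushout of (e_i) in the category of monoid objects of D. -/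
open CategoryTheory CategoryTheory.Limits CategoryTheory.MonoidalCategory

universe w v u

variable {D : Type u} [Category.{v} D] [MonoidalCategory D] [SymmetricCategory D]
  [MonoidalClosed D]

/-- A monoid object structure on an object `A` of `D`. -/
structure MonoidStr (A : D) where
  mul : A ⊗ A ⟶ A
  one : 𝟙_ D ⟶ A
  one_mul : (one ▷ A) ≫ mul = (λ_ A).hom
  mul_one : (A ◁ one) ≫ mul = (ρ_ A).hom
  mul_assoc : (mul ▷ A) ≫ mul = (α_ A A A).hom ≫ (A ◁ mul) ≫ mul

/-- `f` is a morphism of monoid objects from `(A, sA)` to `(B, sB)`. -/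
def IsMonHom {A B : D} (sA : MonoidStr A) (sB : MonoidStr B) (f : A ⟶ B) : Prop :=
  sA.one ≫ f = sB.one ∧ sA.mul ≫ f = (f ⊗ₘ f) ≫ sB.mul

set_option linter.unusedSectionVars false in
open MonoidalClosed in
lemma isWidePushout_whiskerLeft {ι : Type w} {A : D} {B : ι → D} {P : D}
    (f : ∀ i, A ⟶ B i) (g : ∀ i, B i ⟶ P) (g₀ : A ⟶ P)
    (h : IsWidePushout f g g₀) (X : D) :
    IsWidePushout (fun i => X ◁ f i) (fun i => X ◁ g i) (X ◁ g₀) := by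
  refine ⟨fun i => by rw [← MonoidalCategory.whiskerLeft_comp, h.1 i], fun Z c₀ c hc => ?_⟩
  obtain ⟨w, ⟨hw0, hwi⟩, hu⟩ := h.2 (curry c₀) (fun i => curry (c i))
    (fun i => by rw [← curry_natural_left, hc i])
  refine ⟨uncurry w, ⟨?_, fun i => ?_⟩, fun w' hw' => ?_⟩
  · rw [← uncurry_natural_left, hw0, uncurry_curry]
  · rw [← uncurry_natural_left, hwi i, uncurry_curry]
  · have hcw : curry w' = w := hu _ ⟨by rw [← curry_natural_left, hw'.1],
      fun i => by rw [← curry_natural_left, hw'.2 i]⟩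
    rw [← hcw, uncurry_curry]

lemma isWidePushout_whiskerRight {ι : Type w} {A : D} {B : ι → D} {P : D}
    (f : ∀ i, A ⟶ B i) (g : ∀ i, B i ⟶ P) (g₀ : A ⟶ P)
    (h : IsWidePushout f g g₀) (X : D) :
    IsWidePushout (fun i => f i ▷ X) (fun i => g i ▷ X) (g₀ ▷ X) := by
  have hL := isWidePushout_whiskerLeft f g g₀ h X
  refine ⟨fun i => by rw [← comp_whiskerRight, h.1 i], fun Z c₀ c hc => ?_⟩
  obtain ⟨w, ⟨hw0, hwi⟩, hu⟩ := hL.2 ((β_ X A).hom ≫ c₀)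
    (fun i => (β_ X (B i)).hom ≫ c i)
    (fun i => by
      rw [← Category.assoc, BraidedCategory.braiding_naturality_right, Category.assoc, hc i])
  refine ⟨(β_ P X).hom ≫ w, ⟨?_, fun i => ?_⟩, fun w' hw' => ?_⟩
  · rw [← Category.assoc, BraidedCategory.braiding_naturality_left, Category.assoc, hw0,
      ← Category.assoc, SymmetricCategory.symmetry, Category.id_comp]
  · dsimp only
    rw [← Category.assoc, BraidedCategory.braiding_naturality_left, Category.assoc, hwi i,
      ← Category.assoc, SymmetricCategory.symmetry, Category.id_comp]
  · have hw : (β_ X P).hom ≫ w' = w := hu _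
      ⟨by rw [← Category.assoc, BraidedCategory.braiding_naturality_right, Category.assoc,
        hw'.1],
       fun i => by dsimp only; rw [← Category.assoc, BraidedCategory.braiding_naturality_right,
        Category.assoc, hw'.2 i]⟩
    rw [← hw, ← Category.assoc, SymmetricCategory.symmetry, Category.id_comp]

/-- Under the stated assumptions on the class `E`, the forgetful
functor from monoid objects in `D` to `D` creates wide pushouts of `E`-carried
morphisms: given monoid objects `(D₀, s₀)`, `(Di i, s i)` and monoid morphisms
`e i : D₀ ⟶ Di i` lying in `E` with a wide pushout `(ē i, e₀)` in `D`, there is a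
unique monoid structure on `D̄` making `e₀` and all `ē i` monoid morphisms, and with
this structure the cocone is a wide pushout in the category of monoid objects. -/
theorem monoid_creates_wide_pushouts (E : MorphismProperty D)
    (hepi : ∀ {A B : D} (f : A ⟶ B), E f → Epi f)
    (hiso : ∀ {A B : D} (f : A ⟶ B), IsIso f → E f)
    (hcomp : ∀ {A B C : D} (f : A ⟶ B) (g : B ⟶ C), E f → E g → E (f ≫ g))
    (hstable : StableWrt E)
    -- `E` is closed under tensor products
    (htensor : ∀ {A A' B B' : D} (a : A ⟶ A') (b : B ⟶ B'), E a → E b → E (a ⊗ₘ b))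
    -- `E` is closed under wide pushouts
    (hwpclosed : ∀ {ι' : Type w} {A : D} {B : ι' → D} {P : D}
      (f : ∀ j, A ⟶ B j) (g : ∀ j, B j ⟶ P) (g₀ : A ⟶ P),
      (∀ j, E (f j)) → IsWidePushout f g g₀ → (∀ j, E (g j)) ∧ E g₀)
    -- the data: monoid objects, monoid morphisms in `E`, and a wide pushout in `D`
    {ι : Type w} {D₀ : D} {Di : ι → D}
    (s₀ : MonoidStr D₀) (s : ∀ i, MonoidStr (Di i))
    (e : ∀ i, D₀ ⟶ Di i) (hmon : ∀ i, IsMonHom s₀ (s i) (e i)) (he : ∀ i, E (e i))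
    {Dbar : D} (ebar : ∀ i, Di i ⟶ Dbar) (e₀ : D₀ ⟶ Dbar)
    (hwp : IsWidePushout e ebar e₀) :
    ∃ sbar : MonoidStr Dbar,
      (IsMonHom s₀ sbar e₀ ∧ ∀ i, IsMonHom (s i) sbar (ebar i)) ∧
      (∀ sbar' : MonoidStr Dbar,
        (IsMonHom s₀ sbar' e₀ ∧ ∀ i, IsMonHom (s i) sbar' (ebar i)) → sbar' = sbar) ∧
      -- with this structure, the cocone is a wide pushout in the category of
      -- monoid objects of `D`
      ((∀ i, e i ≫ ebar i = e₀) ∧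
        ∀ ⦃N : D⦄ (sN : MonoidStr N) (c₀ : D₀ ⟶ N) (c : ∀ i, Di i ⟶ N),
          IsMonHom s₀ sN c₀ → (∀ i, IsMonHom (s i) sN (c i)) →
          (∀ i, e i ≫ c i = c₀) →
          ∃! w : Dbar ⟶ N,
            IsMonHom sbar sN w ∧ e₀ ≫ w = c₀ ∧ ∀ i, ebar i ≫ w = c i) := by
  classical
  obtain ⟨hcoc, hdesc⟩ := hwp
  have hE := hwpclosed e ebar e₀ he ⟨hcoc, hdesc⟩
  have Ee₀ : E e₀ := hE.2
  have epi00 : Epi (e₀ ⊗ₘ e₀) := hepi _ (htensor _ _ Ee₀ Ee₀)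
  have epi000 : Epi ((e₀ ⊗ₘ e₀) ⊗ₘ e₀) := hepi _ (htensor _ _ (htensor _ _ Ee₀ Ee₀) Ee₀)
  have epiL : Epi (𝟙_ D ◁ e₀) := by
    rw [← MonoidalCategory.id_tensorHom]
    exact hepi _ (htensor _ _ (hiso _ inferInstance) Ee₀)
  have epiR : Epi (e₀ ▷ 𝟙_ D) := by
    rw [← MonoidalCategory.tensorHom_id]
    exact hepi _ (htensor _ _ Ee₀ (hiso _ inferInstance))
  have epiii : ∀ i, Epi (e i ⊗ₘ e i) := fun i => hepi _ (htensor _ _ (he i) (he i))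
  have hwpR : ∀ X : D, IsWidePushout (fun i => e i ▷ X) (fun i => ebar i ▷ X) (e₀ ▷ X) :=
    fun X => isWidePushout_whiskerRight e ebar e₀ ⟨hcoc, hdesc⟩ X
  have hwpL : IsWidePushout (fun i => Dbar ◁ e i) (fun i => Dbar ◁ ebar i) (Dbar ◁ e₀) :=
    isWidePushout_whiskerLeft e ebar e₀ ⟨hcoc, hdesc⟩ Dbar
  -- key algebraic identity
  have hkey : ∀ i, (e i ⊗ₘ e i) ≫ ((s i).mul ≫ ebar i) = s₀.mul ≫ e₀ := fun i => by
    rw [← Category.assoc, ← (hmon i).2, Category.assoc, hcoc i]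
  -- the pushout squares from stability
  have hpo : ∀ i j, IsPushout (e i ▷ D₀) (D₀ ◁ e j) (Di i ◁ e j) (e i ▷ Di j) :=
    fun i j => hstable (e i) (e j) (he i) (he j)
  have hcompat : ∀ i j, (e i ▷ D₀) ≫ ((Di i ◁ e i) ≫ ((s i).mul ≫ ebar i)) =
      (D₀ ◁ e j) ≫ ((e j ▷ Di j) ≫ ((s j).mul ≫ ebar j)) := fun i j => by
    rw [← Category.assoc, ← MonoidalCategory.tensorHom_def, hkey i,
      ← Category.assoc, ← MonoidalCategory.tensorHom_def', hkey j]
  -- partial multiplications c i j : Di i ⊗ Di j ⟶ Dbar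
  let c : ∀ i j, Di i ⊗ Di j ⟶ Dbar := fun i j =>
    (hpo i j).desc ((Di i ◁ e i) ≫ ((s i).mul ≫ ebar i))
      ((e j ▷ Di j) ≫ ((s j).mul ≫ ebar j)) (hcompat i j)
  have hc₁ : ∀ i j, (Di i ◁ e j) ≫ c i j = (Di i ◁ e i) ≫ ((s i).mul ≫ ebar i) :=
    fun i j => (hpo i j).inl_desc _ _ _
  have hc₂ : ∀ i j, (e i ▷ Di j) ≫ c i j = (e j ▷ Di j) ≫ ((s j).mul ≫ ebar j) :=
    fun i j => (hpo i j).inr_desc _ _ _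
  -- m₀ : Dbar ⊗ D₀ ⟶ Dbar
  obtain ⟨m₀, ⟨hm₀0, hm₀i⟩, hm₀u⟩ := (hwpR D₀).2 (s₀.mul ≫ e₀)
    (fun i => (Di i ◁ e i) ≫ ((s i).mul ≫ ebar i))
    (fun i => by
      dsimp only
      rw [← Category.assoc, ← MonoidalCategory.tensorHom_def, hkey i])
  -- m j : Dbar ⊗ Di j ⟶ Dbar
  have hmj := fun j => (hwpR (Di j)).2 ((e j ▷ Di j) ≫ ((s j).mul ≫ ebar j))
    (fun i => c i j) (fun i => hc₂ i j)
  choose m hm hmu using hmj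
  have hm0 : ∀ j, (e₀ ▷ Di j) ≫ m j = (e j ▷ Di j) ≫ ((s j).mul ≫ ebar j) :=
    fun j => (hm j).1
  have hmi : ∀ j i, (ebar i ▷ Di j) ≫ m j = c i j := fun j i => (hm j).2 i
  -- compatibility of m j with m₀
  have hmcompat : ∀ j, (Dbar ◁ e j) ≫ m j = m₀ := fun j => by
    refine hm₀u _ ⟨?_, fun i => ?_⟩
    · rw [← Category.assoc, ← MonoidalCategory.tensorHom_def, MonoidalCategory.tensorHom_def',
        Category.assoc, hm0 j, ← Category.assoc, ← MonoidalCategory.tensorHom_def', hkey j]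
    · dsimp only
      rw [← Category.assoc, ← whisker_exchange, Category.assoc, hmi j i, hc₁ i j]
  -- the multiplication
  obtain ⟨mul, ⟨hmul0, hmulj⟩, _⟩ := hwpL.2 m₀ m hmcompat
  have hkey0 : (e₀ ⊗ₘ e₀) ≫ mul = s₀.mul ≫ e₀ := by
    rw [MonoidalCategory.tensorHom_def, Category.assoc, hmul0, hm₀0]
  -- monoid structure
  refine ⟨⟨mul, s₀.one ≫ e₀, ?_, ?_, ?_⟩, ⟨⟨rfl, hkey0.symm⟩, fun i => ⟨?_, ?_⟩⟩, ?_, hcoc, ?_⟩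
  · -- one_mul
    rw [← cancel_epi (𝟙_ D ◁ e₀)]
    calc (𝟙_ D ◁ e₀) ≫ ((s₀.one ≫ e₀) ▷ Dbar) ≫ mul
        = (((s₀.one ≫ e₀) ▷ D₀) ≫ (Dbar ◁ e₀)) ≫ mul := by
          rw [← Category.assoc, whisker_exchange]
      _ = (s₀.one ▷ D₀) ≫ (e₀ ⊗ₘ e₀) ≫ mul := by
          rw [MonoidalCategory.comp_whiskerRight, MonoidalCategory.tensorHom_def]
          simp only [Category.assoc]
      _ = (s₀.one ▷ D₀) ≫ s₀.mul ≫ e₀ := by rw [hkey0]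
      _ = (λ_ D₀).hom ≫ e₀ := by rw [← Category.assoc, s₀.one_mul]
      _ = (𝟙_ D ◁ e₀) ≫ (λ_ Dbar).hom := by rw [MonoidalCategory.leftUnitor_naturality]
  · -- mul_one
    rw [← cancel_epi (e₀ ▷ 𝟙_ D)]
    calc (e₀ ▷ 𝟙_ D) ≫ (Dbar ◁ (s₀.one ≫ e₀)) ≫ mul
        = ((D₀ ◁ (s₀.one ≫ e₀)) ≫ (e₀ ▷ Dbar)) ≫ mul := by
          rw [← Category.assoc, ← whisker_exchange]
      _ = (D₀ ◁ s₀.one) ≫ (e₀ ⊗ₘ e₀) ≫ mul := by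
          rw [MonoidalCategory.whiskerLeft_comp, MonoidalCategory.tensorHom_def']
          simp only [Category.assoc]
      _ = (D₀ ◁ s₀.one) ≫ s₀.mul ≫ e₀ := by rw [hkey0]
      _ = (ρ_ D₀).hom ≫ e₀ := by rw [← Category.assoc, s₀.mul_one]
      _ = (e₀ ▷ 𝟙_ D) ≫ (ρ_ Dbar).hom := by rw [MonoidalCategory.rightUnitor_naturality]
  · -- mul_assoc
    rw [← cancel_epi ((e₀ ⊗ₘ e₀) ⊗ₘ e₀)]
    calc ((e₀ ⊗ₘ e₀) ⊗ₘ e₀) ≫ (mul ▷ Dbar) ≫ mul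
        = (((e₀ ⊗ₘ e₀) ≫ mul) ⊗ₘ (e₀ ≫ 𝟙 Dbar)) ≫ mul := by
          rw [← Category.assoc, ← MonoidalCategory.tensorHom_id,
            MonoidalCategory.tensorHom_comp_tensorHom]
      _ = ((s₀.mul ≫ e₀) ⊗ₘ (𝟙 D₀ ≫ e₀)) ≫ mul := by rw [hkey0, Category.comp_id,
            Category.id_comp]
      _ = (s₀.mul ▷ D₀) ≫ (e₀ ⊗ₘ e₀) ≫ mul := by
          rw [← MonoidalCategory.tensorHom_comp_tensorHom, MonoidalCategory.tensorHom_id, Category.assoc]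
      _ = (s₀.mul ▷ D₀) ≫ s₀.mul ≫ e₀ := by rw [hkey0]
      _ = ((α_ D₀ D₀ D₀).hom ≫ (D₀ ◁ s₀.mul) ≫ s₀.mul) ≫ e₀ := by
          rw [← Category.assoc, s₀.mul_assoc]
      _ = (α_ D₀ D₀ D₀).hom ≫ (D₀ ◁ s₀.mul) ≫ (e₀ ⊗ₘ e₀) ≫ mul := by
          rw [hkey0]; simp only [Category.assoc]
      _ = (α_ D₀ D₀ D₀).hom ≫ ((𝟙 D₀ ≫ e₀) ⊗ₘ (s₀.mul ≫ e₀)) ≫ mul := by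
          rw [← Category.assoc (D₀ ◁ s₀.mul), ← MonoidalCategory.id_tensorHom,
            MonoidalCategory.tensorHom_comp_tensorHom]
      _ = (α_ D₀ D₀ D₀).hom ≫ ((e₀ ≫ 𝟙 Dbar) ⊗ₘ ((e₀ ⊗ₘ e₀) ≫ mul)) ≫ mul := by
          rw [hkey0, Category.comp_id, Category.id_comp]
      _ = (α_ D₀ D₀ D₀).hom ≫ ((e₀ ⊗ₘ (e₀ ⊗ₘ e₀)) ≫ (Dbar ◁ mul)) ≫ mul := by
          rw [← MonoidalCategory.tensorHom_comp_tensorHom, MonoidalCategory.id_tensorHom]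
      _ = ((e₀ ⊗ₘ e₀) ⊗ₘ e₀) ≫ (α_ Dbar Dbar Dbar).hom ≫ (Dbar ◁ mul) ≫ mul := by
          rw [← Category.assoc ((e₀ ⊗ₘ e₀) ⊗ₘ e₀), MonoidalCategory.associator_naturality]
          simp only [Category.assoc]
  · -- ebar i preserves one
    rw [← (hmon i).1, Category.assoc, hcoc i]
  · -- ebar i preserves mul
    rw [← cancel_epi (e i ⊗ₘ e i), hkey i, ← Category.assoc, MonoidalCategory.tensorHom_comp_tensorHom,
      hcoc i, hkey0]
  · -- uniqueness of the monoid structure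
    rintro ⟨m', o', hom', hmo', hma'⟩ ⟨⟨h1, h2⟩, -⟩
    have hm' : m' = mul := by
      rw [← cancel_epi (e₀ ⊗ₘ e₀), hkey0, h2]
    have ho' : o' = s₀.one ≫ e₀ := h1.symm
    subst hm' ho'
    rfl
  · -- universal property in monoid objects
    intro N sN c₀ cN hc₀ hcN hcompatN
    obtain ⟨w, ⟨hw0, hwi⟩, hu⟩ := hdesc c₀ cN hcompatN
    refine ⟨w, ⟨⟨?_, ?_⟩, hw0, hwi⟩, fun w' hw' => hu w' ⟨hw'.2.1, hw'.2.2⟩⟩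
    · rw [Category.assoc, hw0, hc₀.1]
    · rw [← cancel_epi (e₀ ⊗ₘ e₀)]
      calc (e₀ ⊗ₘ e₀) ≫ mul ≫ w = (s₀.mul ≫ e₀) ≫ w := by rw [← Category.assoc, hkey0]
        _ = s₀.mul ≫ c₀ := by rw [Category.assoc, hw0]
        _ = (c₀ ⊗ₘ c₀) ≫ sN.mul := hc₀.2
        _ = ((e₀ ≫ w) ⊗ₘ (e₀ ≫ w)) ≫ sN.mul := by rw [hw0]
        _ = (e₀ ⊗ₘ e₀) ≫ (w ⊗ₘ w) ≫ sN.mul := by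
            rw [← MonoidalCategory.tensorHom_comp_tensorHom, Category.assoc]
end

section
/- Let M be a deterministic automaton over alphabet X with state type Q accepting the language L ⊆ X⁎, and suppose M is reachable (every state of Q equals evalFrom(start, w) for some word w) and simple (any two states accepting the same language from them are equal, i.e. if for all w, evalFrom(q, w) ∈ accept ↔ evalFrom(q', w) ∈ accept, then q = q'). Then for all words u, v ∈ X⁎: the extended transition functions of u and v coincide (∀ q, evalFrom(q, u) = evalFrom(q, v)) if and only if u ≡_L v, where ≡_L is the syntactic congruence of L. Consequently, the syntactic monoid X⁎/≡_L is isomorphic as a monoid to the transition monoid of M. -/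
/-- The syntactic congruence of a language `L` over `X`:
`u ≡_L v` iff `∀ x y, x·u·y ∈ L ↔ x·v·y ∈ L`. -/
def synCon {X : Type*} (L : Set (FreeMonoid X)) : Con (FreeMonoid X) where
  r u v := ∀ x y : FreeMonoid X, x * u * y ∈ L ↔ x * v * y ∈ L
  iseqv := ⟨fun _ _ _ => Iff.rfl, fun h x y => (h x y).symm,
    fun h₁ h₂ x y => (h₁ x y).trans (h₂ x y)⟩
  mul' := by
    intro a b c d h₁ h₂ x y
    have h₃ := h₁ x (c * y)
    have h₄ := h₂ (x * b) y
    simp only [← mul_assoc] at h₃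
    simp only [mul_assoc] at h₃ h₄ ⊢
    exact h₃.trans h₄

/-- The monoid homomorphism `t : X⁎ →* End(σ)ᵐᵒᵖ` sending a word `w` to its extended
transition function `q ↦ evalFrom(q, w)`; the opposite monoid is used so that
endofunctions are composed in diagrammatic order. -/
def transHom {X σ : Type*} (M : DFA X σ) : FreeMonoid X →* (Function.End σ)ᵐᵒᵖ where
  toFun w := MulOpposite.op (fun q => M.evalFrom q (FreeMonoid.toList w))
  map_one' := by
    apply congrArg MulOpposite.op
    funext q
    exact M.evalFrom_nil q
  map_mul' u v := by
    show MulOpposite.op _ = MulOpposite.op _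
    apply congrArg MulOpposite.op
    funext q
    show M.evalFrom q (FreeMonoid.toList u ++ FreeMonoid.toList v) = _
    simp [DFA.evalFrom, List.foldl_append]
    rfl

/-- For a reachable and simple deterministic automaton `M` accepting
the language `L`, two words act identically on all states iff they are syntactically
congruent for `L`; consequently the syntactic monoid `X⁎/≡_L` is isomorphic to the
transition monoid of `M` (the image of `transHom M`). -/
theorem syntactic_monoid_iso_transition_monoid {X σ : Type*} (M : DFA X σ)
    (hreach : ∀ q : σ, ∃ w : List X, M.evalFrom M.start w = q)
    (hsimple : ∀ q q' : σ,
      (∀ w : List X, M.evalFrom q w ∈ M.accept ↔ M.evalFrom q' w ∈ M.accept) → q = q')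
    (L : Set (FreeMonoid X))
    (hL : L = {w : FreeMonoid X | M.evalFrom M.start (FreeMonoid.toList w) ∈ M.accept}) :
    (∀ u v : FreeMonoid X,
      (∀ q : σ, M.evalFrom q (FreeMonoid.toList u) = M.evalFrom q (FreeMonoid.toList v)) ↔
        (synCon L) u v) ∧
    Nonempty ((synCon L).Quotient ≃* MonoidHom.mrange (transHom M)) := by

  have key : ∀ u v : FreeMonoid X,
      (∀ q : σ, M.evalFrom q (FreeMonoid.toList u) = M.evalFrom q (FreeMonoid.toList v)) ↔
        (synCon L) u v := by
    intro u v
    constructor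
    · intro h x y
      subst hL
      simp only [Set.mem_setOf_eq, FreeMonoid.toList_mul, DFA.evalFrom_of_append, h]
    · intro h q
      obtain ⟨w, hw⟩ := hreach q
      apply hsimple
      intro y
      have := h (FreeMonoid.ofList w) (FreeMonoid.ofList y)
      subst hL
      simpa [FreeMonoid.toList_mul, DFA.evalFrom_of_append, hw] using this
  refine ⟨key, ?_⟩
  have hcon : synCon L = Con.ker (transHom M) := by
    ext u v
    rw [← key]
    constructor
    · intro h
      apply congrArg MulOpposite.op
      funext q
      exact h q
    · intro h q
      exact congrFun (congrArg MulOpposite.unop h) q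
  exact ⟨(Con.congr (MulEquiv.refl _) (hcon.trans (by ext; rfl))).trans (Con.quotientKerEquivRange (transHom M))⟩
end

section
/- Let D be a symmetric monoidal closed category with countable coproducts, X an object of D, and X⁎ the free monoid object on X with universal morphism η_X : X → X⁎, the carrier of the initial algebra for F Q = I + X ⊗ Q. Let (M, m, i) be a monoid object of D and e : X⁎ → M a monoid morphism. Equip M with the F-algebra structure [i, m ∘ ((e ∘ η_X) ⊗ M)] : I + X ⊗ M → M (the F-algebra associated to M and e ∘ η_X). Then e is the unique F-algebra homomorphism from the initial F-algebra X⁎ to this F-algebra. Consequently, if f : M → Y is any morphism, the language f ∘ e recognized by e via f equals the language f ∘ e_M accepted by the derived automaton (M, m ∘ ((e∘η_X) ⊗ M), i, f), where e_M is the unique F-algebra homomorphism out of the initial algebra. -/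
open CategoryTheory CategoryTheory.Limits CategoryTheory.MonoidalCategory

universe v u

variable {D : Type u} [Category.{v} D] [MonoidalCategory D] [SymmetricCategory D]
  [MonoidalClosed D] [HasCountableCoproducts D]

lemma eqToHom_comp_ι (X : D) {a b : ℕ} (h : a = b) :
    eqToHom (congrArg (tpow X) h) ≫ Sigma.ι (tpow X) b = Sigma.ι (tpow X) a := by
  subst h; simp

lemma eta_mul_ι (X : D) (sXs : MonoidStr (Xstar X))
    (hmul : ∀ n k : ℕ,
      (Sigma.ι (tpow X) n ⊗ₘ Sigma.ι (tpow X) k) ≫ sXs.mul =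
        (tpowAdd X n k).hom ≫ Sigma.ι (tpow X) (n + k)) (n : ℕ) :
    (etaX X ⊗ₘ Sigma.ι (tpow X) n) ≫ sXs.mul = Sigma.ι (tpow X) (n + 1) := by
  have h1 : etaX X ⊗ₘ Sigma.ι (tpow X) n
      = ((ρ_ X).inv ▷ tpow X n) ≫ (Sigma.ι (tpow X) 1 ⊗ₘ Sigma.ι (tpow X) n) := by
    rw [etaX, ← tensorHom_id ((ρ_ X).inv)]
    have h := tensorHom_comp_tensorHom (ρ_ X).inv (𝟙 (tpow X n)) (Sigma.ι (tpow X) 1)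
      (Sigma.ι (tpow X) n)
    rw [Category.id_comp] at h
    exact h.symm
  rw [h1, Category.assoc]
  erw [hmul 1 n]
  simp only [tpowAdd, tpow, Iso.trans_hom, whiskerLeftIso_hom, eqToIso.hom,
    Category.assoc, MonoidalCategory.whiskerLeft_comp, whiskerLeft_eqToHom,
    eqToHom_trans, eqToHom_trans_assoc]
  slice_lhs 2 3 => rw [MonoidalCategory.triangle]
  slice_lhs 1 2 => rw [← comp_whiskerRight, Iso.inv_hom_id,
    MonoidalCategory.id_whiskerRight]
  rw [Category.id_comp]
  exact eqToHom_comp_ι X (Nat.add_comm n 1)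

lemma alg_hom_unique (X : D) (sXs : MonoidStr (Xstar X))
    (hmul : ∀ n k : ℕ,
      (Sigma.ι (tpow X) n ⊗ₘ Sigma.ι (tpow X) k) ≫ sXs.mul =
        (tpowAdd X n k).hom ≫ Sigma.ι (tpow X) (n + k))
    (A : D) (sA : MonoidStr A) (g : X ⟶ A) (e₁ e₂ : Xstar X ⟶ A)
    (h1 : (Ffun X).map e₁ ≫ coprod.desc sA.one ((g ▷ A) ≫ sA.mul) =
      coprod.desc (iX X) ((etaX X ▷ Xstar X) ≫ sXs.mul) ≫ e₁)
    (h2 : (Ffun X).map e₂ ≫ coprod.desc sA.one ((g ▷ A) ≫ sA.mul) =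
      coprod.desc (iX X) ((etaX X ▷ Xstar X) ≫ sXs.mul) ≫ e₂) : e₁ = e₂ := by
  have hl : ∀ (e : Xstar X ⟶ A),
      (Ffun X).map e ≫ coprod.desc sA.one ((g ▷ A) ≫ sA.mul) =
        coprod.desc (iX X) ((etaX X ▷ Xstar X) ≫ sXs.mul) ≫ e →
      (Sigma.ι (tpow X) 0 ≫ e = sA.one) ∧
      ((X ◁ e) ≫ (g ▷ A) ≫ sA.mul = (etaX X ▷ Xstar X) ≫ sXs.mul ≫ e) := by
    intro e he
    constructor
    · have := coprod.inl ≫= he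
      erw [coprod.inl_map_assoc, Category.id_comp, coprod.inl_desc, coprod.inl_desc_assoc] at this
      exact this.symm
    · have := coprod.inr ≫= he
      erw [coprod.inr_map_assoc, coprod.inr_desc, coprod.inr_desc_assoc] at this
      simpa [Ffun] using this
  obtain ⟨h1a, h1b⟩ := hl e₁ h1
  obtain ⟨h2a, h2b⟩ := hl e₂ h2
  apply Sigma.hom_ext
  intro n
  induction n with
  | zero => rw [h1a, h2a]
  | succ n ih =>
    have key : ∀ (e : Xstar X ⟶ A),
        (X ◁ e) ≫ (g ▷ A) ≫ sA.mul = (etaX X ▷ Xstar X) ≫ sXs.mul ≫ e →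
        Sigma.ι (tpow X) (n + 1) ≫ e
          = (X ◁ (Sigma.ι (tpow X) n ≫ e)) ≫ (g ▷ A) ≫ sA.mul := by
      intro e heb
      have : Sigma.ι (tpow X) (n + 1) ≫ e
          = (X ◁ Sigma.ι (tpow X) n) ≫ (etaX X ▷ Xstar X) ≫ sXs.mul ≫ e := by
        rw [← eta_mul_ι X sXs hmul n, tensorHom_def']
        erw [Category.assoc, Category.assoc]
        rfl
      rw [this, ← heb, ← Category.assoc, ← MonoidalCategory.whiskerLeft_comp]
    rw [key e₁ h1b, key e₂ h2b, ih]

/-- Let `X⁎` carry the free monoid object structure (pinned down by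
the component equations), which makes it the initial algebra for `F Q = I + X ⊗ Q`
with structure `[i_X, m_X ∘ (η_X ⊗ X⁎)]`.  For any monoid object `(A, sA)` and monoid
morphism `e : X⁎ ⟶ A`, the morphism `e` is the unique `F`-algebra homomorphism from
the initial `F`-algebra `X⁎` to the `F`-algebra `[i, m ∘ ((e ∘ η_X) ⊗ A)]` associated
to `A` and `e ∘ η_X`.  Consequently, for every `f : A ⟶ Y`, the language `f ∘ e`
recognized by `e` via `f` equals the language `f ∘ e_A` accepted by the derived
automaton, `e_A` being the unique `F`-algebra homomorphism out of the initial
algebra. -/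
theorem monoid_morphism_is_unique_algebra_hom (X : D)
    (sXs : MonoidStr (Xstar X)) (hone : sXs.one = iX X)
    (hmul : ∀ n k : ℕ,
      (Sigma.ι (tpow X) n ⊗ₘ Sigma.ι (tpow X) k) ≫ sXs.mul =
        (tpowAdd X n k).hom ≫ Sigma.ι (tpow X) (n + k))
    (A : D) (sA : MonoidStr A) (e : Xstar X ⟶ A) (he : IsMonHom sXs sA e) :
    -- `e` is an `F`-algebra homomorphism from the initial `F`-algebra `X⁎`
    -- to the `F`-algebra associated to `A` and `e ∘ η_X`
    ((Ffun X).map e ≫ coprod.desc sA.one (((etaX X ≫ e) ▷ A) ≫ sA.mul) =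
      coprod.desc (iX X) ((etaX X ▷ Xstar X) ≫ sXs.mul) ≫ e) ∧
    -- and it is the unique such homomorphism
    (∀ e' : Xstar X ⟶ A,
      (Ffun X).map e' ≫ coprod.desc sA.one (((etaX X ≫ e) ▷ A) ≫ sA.mul) =
        coprod.desc (iX X) ((etaX X ▷ Xstar X) ≫ sXs.mul) ≫ e' → e' = e) ∧
    -- consequently, the language recognized by `e` via `f` is the language
    -- accepted by the derived automaton
    (∀ (Y : D) (f : A ⟶ Y) (eA : Xstar X ⟶ A),
      (Ffun X).map eA ≫ coprod.desc sA.one (((etaX X ≫ e) ▷ A) ≫ sA.mul) =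
        coprod.desc (iX X) ((etaX X ▷ Xstar X) ≫ sXs.mul) ≫ eA →
      e ≫ f = eA ≫ f) := by
  have hex : (Ffun X).map e ≫ coprod.desc sA.one (((etaX X ≫ e) ▷ A) ≫ sA.mul) =
      coprod.desc (iX X) ((etaX X ▷ Xstar X) ≫ sXs.mul) ≫ e := by
    apply coprod.hom_ext
    · erw [coprod.inl_map_assoc]
      simp only [Ffun_map, coprod.inl_map_assoc, coprod.inl_desc,
        Category.id_comp, coprod.inl_desc_assoc]
      rw [← hone]
      exact he.1.symm
    · erw [coprod.inr_map_assoc]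
      simp only [Ffun_map, coprod.inr_map_assoc, coprod.inr_desc,
        coprod.inr_desc_assoc]
      rw [Category.assoc, he.2, MonoidalCategory.tensorHom_def, whisker_exchange_assoc]
      simp [comp_whiskerRight]
  refine ⟨hex, fun e' he' => ?_, fun Y f eA hA => ?_⟩
  · exact alg_hom_unique X sXs hmul A sA (etaX X ≫ e) e' e he' hex
  · rw [alg_hom_unique X sXs hmul A sA (etaX X ≫ e) eA e hA hex]
end
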